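/- If the average equilibrium proposals a^{g|_S}(ρ) satisfy the recursion a_i^{g|_S}(ρ) = (1/Σ_{j∈S} w_j) [ w_i (v(g|_S) − v(g|_{S\i})) + Σ_{j≠i} w_j a_i^{g|_{S\j}}(ρ) ] together with the base case a_i^{g|_{\{i\}}}(ρ) = 0, then a_i^{g|_S}(ρ) = Y_i^{w-MV}(g|_S, v) for all i ∈ S ⊆ N; in particular the equilibrium payoffs do not depend on ρ. -/

import Mathlib

open Finset

variable {n : ℕ}

/-- A network on player set `Fin n`: a finite set of (unordered) links. -/
abbrev Network (n : ℕ) := Finset (Sym2 (Fin n))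

/-- The set of non-isolated players of a network. -/
def players (g : Network n) : Finset (Fin n) :=
  Finset.univ.filter (fun i => ∃ e ∈ g, i ∈ e)

/-- Harsanyi dividend of a value function at a network. -/
noncomputable def dividend (v : Network n → ℝ) (g' : Network n) : ℝ :=
  ∑ g'' ∈ g'.powerset, (-1 : ℝ) ^ (g'.card - g''.card) * v g''

/-- The weighted Myerson value. -/
noncomputable def wMV (w : Fin n → ℝ) (v : Network n → ℝ) (g : Network n) (i : Fin n) : ℝ :=
  ∑ g' ∈ g.powerset.filter (fun g' => i ∈ players g'),
    (w i / ∑ j ∈ players g', w j) * dividend v g'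

/-- Connectivity of two players through links of `g`. -/
def connectedIn (g : Network n) (i j : Fin n) : Prop :=
  Relation.ReflTransGen (fun a b => s(a, b) ∈ g) i j

open Classical in
/-- The component of `g` containing the link `e`. -/
noncomputable def component (g : Network n) (e : Sym2 (Fin n)) : Network n :=
  g.filter (fun e' => ∃ i ∈ e, ∃ j ∈ e', connectedIn g i j)

/-- The set of components (maximal connected subnetworks) of `g`. -/
noncomputable def components (g : Network n) : Finset (Network n) :=
  g.image (component g)

/-- Component additive value functions. -/
def componentAdditive (v : Network n → ℝ) : Prop :=
  ∀ g : Network n, v g = ∑ h ∈ components g, v h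

open Classical in
/-- The restriction `g|_S` of a network to a coalition `S`. -/
noncomputable def restrict (g : Network n) (S : Finset (Fin n)) : Network n :=
  g.filter (fun e => ∀ i ∈ e, i ∈ S)

/-- The set `g_i` of links of player `i` in `g`. -/
def glinks (g : Network n) (i : Fin n) : Network n :=
  g.filter (fun e => i ∈ e)


lemma mem_players' {g : Network n} {i : Fin n} : i ∈ players g ↔ ∃ e ∈ g, i ∈ e := by
  simp [players]

lemma alt_sum (s : Network n) :
    ∑ t ∈ s.powerset, (-1 : ℝ) ^ t.card = if s = ∅ then 1 else 0 := by
  have h := Finset.sum_powerset_neg_one_pow_card (x := s)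
  have h2 : ((∑ m ∈ s.powerset, (-1 : ℤ) ^ m.card : ℤ) : ℝ)
      = ∑ m ∈ s.powerset, (-1 : ℝ) ^ m.card := by push_cast; rfl
  rw [← h2, h]
  split <;> simp

lemma sum_dividend (v : Network n → ℝ) (h : Network n) :
    ∑ g' ∈ h.powerset, dividend v g' = v h := by
  classical
  unfold dividend
  rw [Finset.sum_comm' (s' := fun g'' => h.powerset.filter (fun g' => g'' ⊆ g'))
      (t' := h.powerset) (by
        intro g' g''
        simp only [mem_powerset, mem_filter]
        constructor
        · rintro ⟨h1, h2⟩; exact ⟨⟨h1, h2⟩, h2.trans h1⟩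
        · rintro ⟨⟨h1, h2⟩, _⟩; exact ⟨h1, h2⟩)]
  have key : ∀ g'' ∈ h.powerset,
      ∑ g' ∈ h.powerset.filter (fun g' => g'' ⊆ g'), (-1 : ℝ) ^ (g'.card - g''.card) * v g''
      = (if h \ g'' = ∅ then 1 else 0) * v g'' := by
    intro g'' hg''
    rw [← Finset.sum_mul]
    congr 1
    have hbij : ∑ g' ∈ h.powerset.filter (fun g' => g'' ⊆ g'), (-1 : ℝ) ^ (g'.card - g''.card)
        = ∑ t ∈ (h \ g'').powerset, (-1 : ℝ) ^ t.card := by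
      apply Finset.sum_nbij' (i := fun g' => g' \ g'') (j := fun t => g'' ∪ t)
      · intro g' hg'
        simp only [mem_filter, mem_powerset] at hg' ⊢
        exact Finset.sdiff_subset_sdiff hg'.1 le_rfl
      · intro t ht
        simp only [mem_powerset] at ht
        refine Finset.mem_filter.2 ⟨Finset.mem_powerset.2 ?_, Finset.subset_union_left⟩
        exact Finset.union_subset (Finset.mem_powerset.1 hg'') (ht.trans Finset.sdiff_subset)
      · intro g' hg'
        simp only [mem_filter, mem_powerset] at hg'
        exact Finset.union_sdiff_of_subset hg'.2
      · intro t ht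
        simp only [mem_powerset] at ht
        exact Finset.union_sdiff_cancel_left
          ((Finset.sdiff_disjoint.mono_left ht).symm)
      · intro g' hg'
        simp only [mem_filter, mem_powerset] at hg'
        rw [Finset.card_sdiff_of_subset hg'.2]
    rw [hbij, alt_sum]
  rw [Finset.sum_congr rfl key]
  rw [Finset.sum_eq_single h]
  · simp
  · intro g'' hg'' hne
    rw [if_neg, zero_mul]
    simp only [Finset.sdiff_eq_empty_iff_subset]
    intro hsub
    exact hne (Finset.Subset.antisymm (Finset.mem_powerset.1 hg'') hsub)
  · intro hh; exact absurd (Finset.mem_powerset.2 le_rfl) hh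

lemma mem_restrict {g : Network n} {S : Finset (Fin n)} {e : Sym2 (Fin n)} :
    e ∈ _root_.restrict g S ↔ e ∈ g ∧ ∀ i ∈ e, i ∈ S := by
  classical
  simp [_root_.restrict]

lemma subset_restrict_erase {g : Network n} {S : Finset (Fin n)} {j : Fin n} {g' : Network n} :
    g' ⊆ _root_.restrict g (S.erase j) ↔ g' ⊆ _root_.restrict g S ∧ j ∉ players g' := by
  constructor
  · intro hsub
    constructor
    · intro e he
      have h1 := mem_restrict.1 (hsub he)
      exact mem_restrict.2 ⟨h1.1, fun k hk => Finset.mem_of_mem_erase (h1.2 k hk)⟩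
    · rw [mem_players']
      rintro ⟨e, he, hje⟩
      exact Finset.notMem_erase j S ((mem_restrict.1 (hsub he)).2 j hje)
  · rintro ⟨hsub, hj⟩
    intro e he
    have h1 := mem_restrict.1 (hsub he)
    refine mem_restrict.2 ⟨h1.1, fun k hk => Finset.mem_erase.2 ⟨?_, h1.2 k hk⟩⟩
    rintro rfl
    exact hj (mem_players'.2 ⟨e, he, hk⟩)

lemma powerset_restrict_erase (g : Network n) (S : Finset (Fin n)) (j : Fin n) :
    (_root_.restrict g (S.erase j)).powerset
      = (_root_.restrict g S).powerset.filter (fun g' => j ∉ players g') := by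
  ext g'
  simp only [mem_powerset, mem_filter, subset_restrict_erase]

lemma players_subset {g : Network n} {S : Finset (Fin n)} {g' : Network n}
    (h : g' ⊆ _root_.restrict g S) : players g' ⊆ S := by
  intro k hk
  rw [mem_players'] at hk
  obtain ⟨e, he, hke⟩ := hk
  exact (mem_restrict.1 (h he)).2 k hke

lemma sum_dividend_filter (v : Network n → ℝ) (g : Network n) (S : Finset (Fin n)) (j : Fin n) :
    ∑ g' ∈ (_root_.restrict g S).powerset.filter (fun g' => j ∈ players g'), dividend v g'
      = v (_root_.restrict g S) - v (_root_.restrict g (S.erase j)) := by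
  classical
  have h1 := Finset.sum_filter_add_sum_filter_not (_root_.restrict g S).powerset
    (fun g' => j ∈ players g') (dividend v)
  rw [sum_dividend] at h1
  rw [← powerset_restrict_erase, sum_dividend] at h1
  linarith

lemma key_identity (w : Fin n → ℝ) (hw : ∀ k, 0 < w k) (v : Network n → ℝ)
    (g : Network n) (S : Finset (Fin n)) (i : Fin n) (hi : i ∈ S) :
    (∑ j ∈ S, w j) * wMV w v (_root_.restrict g S) i
      = w i * (v (_root_.restrict g S) - v (_root_.restrict g (S.erase i)))
        + ∑ j ∈ S.erase i, w j * wMV w v (_root_.restrict g (S.erase j)) i := by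
  classical
  set A := (_root_.restrict g S).powerset.filter (fun g' => i ∈ players g') with hA
  set c : Network n → ℝ := fun g' => (w i / ∑ k ∈ players g', w k) * dividend v g' with hc
  have hWpos : ∀ g' ∈ A, 0 < ∑ k ∈ players g', w k := by
    intro g' hg'
    apply Finset.sum_pos (fun k _ => hw k)
    exact ⟨i, (Finset.mem_filter.1 hg').2⟩
  have hY : wMV w v (_root_.restrict g S) i = ∑ g' ∈ A, c g' := rfl
  have hstep1 : ∀ j ∈ S.erase i,
      wMV w v (_root_.restrict g (S.erase j)) i
        = ∑ g' ∈ A.filter (fun g' => j ∉ players g'), c g' := by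
    intro j hj
    have hset : (_root_.restrict g (S.erase j)).powerset.filter (fun g' => i ∈ players g')
        = A.filter (fun g' => j ∉ players g') := by
      ext g'
      simp only [hA, mem_filter, mem_powerset, subset_restrict_erase]
      tauto
    show ∑ g' ∈ _, c g' = _
    rw [hset]
  have h2 : ∑ j ∈ S.erase i, w j * wMV w v (_root_.restrict g (S.erase j)) i
      = ∑ j ∈ S.erase i, w j * ∑ g' ∈ A.filter (fun g' => j ∉ players g'), c g' :=
    Finset.sum_congr rfl fun j hj => by rw [hstep1 j hj]
  have hswap : ∑ j ∈ S.erase i, w j * ∑ g' ∈ A.filter (fun g' => j ∉ players g'), c g'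
      = ∑ g' ∈ A, (∑ j ∈ (S.erase i).filter (fun j => j ∉ players g'), w j) * c g' := by
    have h3 : ∀ j ∈ S.erase i, w j * ∑ g' ∈ A.filter (fun g' => j ∉ players g'), c g'
        = ∑ g' ∈ A, if j ∉ players g' then w j * c g' else 0 := by
      intro j _
      rw [Finset.mul_sum, Finset.sum_filter]
    rw [Finset.sum_congr rfl h3, Finset.sum_comm]
    exact Finset.sum_congr rfl fun g' _ => by rw [Finset.sum_mul, Finset.sum_filter]
  have hstep3 : ∀ g' ∈ A, (∑ j ∈ (S.erase i).filter (fun j => j ∉ players g'), w j) * c g'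
      = (∑ j ∈ S, w j) * c g' - w i * dividend v g' := by
    intro g' hg'
    have hmem := Finset.mem_filter.1 hg'
    have hpl : players g' ⊆ S := players_subset (Finset.mem_powerset.1 hmem.1)
    have hset : (S.erase i).filter (fun j => j ∉ players g') = S \ players g' := by
      ext j
      simp only [mem_filter, mem_erase, mem_sdiff]
      constructor
      · rintro ⟨⟨_, hjS⟩, hjp⟩; exact ⟨hjS, hjp⟩
      · rintro ⟨hjS, hjp⟩
        exact ⟨⟨fun h => hjp (h ▸ hmem.2), hjS⟩, hjp⟩
    rw [hset, Finset.sum_sdiff_eq_sub hpl]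
    have hW := (hWpos g' hg').ne'
    rw [hc]
    field_simp
  have h4 : ∑ g' ∈ A, (∑ j ∈ (S.erase i).filter (fun j => j ∉ players g'), w j) * c g'
      = (∑ j ∈ S, w j) * (∑ g' ∈ A, c g') - w i * ∑ g' ∈ A, dividend v g' := by
    rw [Finset.sum_congr rfl hstep3, Finset.sum_sub_distrib, ← Finset.mul_sum, ← Finset.mul_sum]
  have h5 : ∑ g' ∈ A, dividend v g'
      = v (_root_.restrict g S) - v (_root_.restrict g (S.erase i)) := by
    rw [hA]; exact sum_dividend_filter v g S i
  rw [hY, h2, hswap, h4, h5]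
  ring


/-- Average equilibrium proposals satisfying the recursion coincide with the weighted
Myerson value on restricted networks (so they do not depend on ρ). -/
theorem bidding_payoffs_eq_wMV (w : Fin n → ℝ) (hw : ∀ k, 0 < w k)
    (v : Network n → ℝ) (hv : v ∅ = 0) (g : Network n)
    (b : Finset (Fin n) → Fin n → ℝ)
    (hbase : ∀ i : Fin n, b {i} i = 0)
    (hrec : ∀ S : Finset (Fin n), ∀ i ∈ S,
      b S i = (1 / ∑ j ∈ S, w j) *
        (w i * (v (restrict g S) - v (restrict g (S.erase i))) +
          ∑ j ∈ S.erase i, w j * b (S.erase j) i)) :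
    ∀ S : Finset (Fin n), ∀ i ∈ S, b S i = wMV w v (restrict g S) i := by
  intro S
  induction S using Finset.strongInductionOn with
  | _ S ih =>
    intro i hi
    rw [hrec S i hi]
    have hsum : ∑ j ∈ S.erase i, w j * b (S.erase j) i
        = ∑ j ∈ S.erase i, w j * wMV w v (restrict g (S.erase j)) i :=
      Finset.sum_congr rfl fun j hj => by
        have hji := Finset.mem_erase.1 hj
        rw [ih (S.erase j) (Finset.erase_ssubset hji.2) i
          (Finset.mem_erase.2 ⟨Ne.symm hji.1, hi⟩)]
    rw [hsum, ← key_identity w hw v g S i hi]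
    have hWS : (∑ j ∈ S, w j) ≠ 0 := (Finset.sum_pos (fun k _ => hw k) ⟨i, hi⟩).ne'
    rw [one_div, inv_mul_cancel_left₀ hWS]
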